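/- Let (Ω, F, μ) be a probability space and (ξ_i)_{i∈I} a family of independent, essentially bounded, complex-valued random variables on Ω such that for each i ∈ I and all n, m ≥ 0 with n ≠ m, E[ξ_iⁿ · conj(ξ_i)ᵐ] = 0. Consider the noncommutative probability space A = M₂(L^∞(μ)) with φ(a) = E[(a₁₁ + a₂₂)/2], and define x_i ∈ A as the matrix with entries (x_i)₁₁ = (x_i)₂₂ = 0, (x_i)₁₂ = ξ_i, (x_i)₂₁ = conj(ξ_i). Then the family (x_i)_{i∈I} half-commutes and is half-independent with respect to φ. -/

import Mathlib

/-- The block of `v` in the partition `π`. -/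
def block {α : Type*} (π : Setoid α) (v : α) : Set α := {w : α | π.r v w}

/-- A balanced partition: each block contains as many odd as even elements of `{1,…,k}`
(position `t : Fin k` corresponds to the number `t+1 ∈ {1,…,k}`). -/
def BalancedPartition {k : ℕ} (π : Setoid (Fin k)) : Prop :=
  ∀ v : Fin k,
    (block π v ∩ {w : Fin k | (w : ℕ) % 2 = 0}).ncard =
    (block π v ∩ {w : Fin k | (w : ℕ) % 2 = 1}).ncard

/-- A family `(x_i)` is half-independent with respect to the state `φ` if
(a) the squares `x_i²` are independent: `φ(x_{j₁}^{2k₁} ⋯ x_{j_m}^{2k_m})` factors for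
distinct `j₁,…,j_m` and `k₁,…,k_m ≥ 1`, and
(b) `φ(x_{i₁} ⋯ x_{i_k}) = 0` whenever `ker i` is not balanced. -/
def HalfIndependent {A : Type*} [Ring A] {I : Type*} (φ : A → ℂ) (x : I → A) : Prop :=
  (∀ (m : ℕ) (j : Fin m → I), Function.Injective j → ∀ e : Fin m → ℕ, (∀ r, 1 ≤ e r) →
      φ (List.ofFn (fun r => x (j r) ^ (2 * e r))).prod = ∏ r, φ (x (j r) ^ (2 * e r))) ∧
  (∀ (k : ℕ) (i : Fin k → I), ¬ BalancedPartition (Setoid.ker i) →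
      φ (List.ofFn (fun t => x (i t))).prod = 0)

open MeasureTheory ProbabilityTheory

lemma indep_integral_mul_cplx {Ω : Type*} [MeasurableSpace Ω] {μ : Measure Ω}
    [IsProbabilityMeasure μ] {X Y : Ω → ℂ} (hX : Measurable X) (hY : Measurable Y)
    (h : IndepFun X Y μ) :
    ∫ ω, X ω * Y ω ∂μ = (∫ ω, X ω ∂μ) * ∫ ω, Y ω ∂μ := by
  have hmap : μ.map (fun ω => (X ω, Y ω)) = (μ.map X).prod (μ.map Y) :=
    (indepFun_iff_map_prod_eq_prod_map_map hX.aemeasurable hY.aemeasurable).mp h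
  have h1 : IsProbabilityMeasure (μ.map X) := Measure.isProbabilityMeasure_map hX.aemeasurable
  have h2 : IsProbabilityMeasure (μ.map Y) := Measure.isProbabilityMeasure_map hY.aemeasurable
  calc ∫ ω, X ω * Y ω ∂μ
      = ∫ p : ℂ × ℂ, p.1 * p.2 ∂(μ.map fun ω => (X ω, Y ω)) := by
        rw [integral_map (hX.prodMk hY).aemeasurable]
        exact (measurable_fst.mul measurable_snd).aestronglyMeasurable
    _ = ∫ p : ℂ × ℂ, p.1 * p.2 ∂((μ.map X).prod (μ.map Y)) := by rw [hmap]
    _ = (∫ ω, X ω ∂μ) * ∫ ω, Y ω ∂μ := by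
        rw [integral_prod_mul (fun z : ℂ => z) (fun z : ℂ => z)]
        rw [show (fun x : ℂ => x) = id from rfl, integral_map hX.aemeasurable aestronglyMeasurable_id,
          integral_map hY.aemeasurable aestronglyMeasurable_id]; rfl


lemma indep_integral_prod {Ω I : Type*} [MeasurableSpace Ω] {μ : Measure Ω}
    [IsProbabilityMeasure μ] (ξ : I → Ω → ℂ) (hmeas : ∀ i, Measurable (ξ i))
    (hindep : iIndepFun ξ μ)
    {κ : Type*} (s : Finset κ) (u : κ → I) (hu : Set.InjOn u s)
    (g : κ → ℂ → ℂ) (hg : ∀ r, Measurable (g r)) :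
    ∫ ω, ∏ r ∈ s, g r (ξ (u r) ω) ∂μ = ∏ r ∈ s, ∫ ω, g r (ξ (u r) ω) ∂μ := by
  classical
  induction s using Finset.cons_induction with
  | empty => simp
  | cons a s' ha IH =>
    have hsub : (s' : Set κ) ⊆ ((Finset.cons a s' ha : Finset κ) : Set κ) := by
      intro x hx
      simp only [Finset.coe_cons, Set.mem_insert_iff]
      right
      exact hx
    have hu' : Set.InjOn u s' := hu.mono hsub
    have hnotmem : u a ∉ s'.image u := by
      simp only [Finset.mem_image, not_exists]
      rintro r ⟨hr, hra⟩
      have : r = a := hu (by simp [hr]) (by simp) hra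
      rw [this] at hr; exact ha hr
    have hdisj : Disjoint ({u a} : Finset I) (s'.image u) := by
      simpa [Finset.disjoint_singleton_left] using hnotmem
    have hbase := hindep.indepFun_finset {u a} (s'.image u) hdisj hmeas
    have hXY : IndepFun (fun ω => g a (ξ (u a) ω))
        (fun ω => ∏ r ∈ s', g r (ξ (u r) ω)) μ := by
      have hφXm : Measurable (fun v : (({u a} : Finset I) : Type _) → ℂ =>
          g a (v ⟨u a, Finset.mem_singleton_self _⟩)) :=
        (hg a).comp (measurable_pi_apply _)
      have hφYm : Measurable (fun w : ((s'.image u : Finset I) : Type _) → ℂ =>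
          ∏ r ∈ s'.attach, g r.1 (w ⟨u r.1, Finset.mem_image_of_mem u r.2⟩)) :=
        Finset.measurable_prod _ (fun r _ => (hg r.1).comp (measurable_pi_apply _))
      have H := hbase.comp hφXm hφYm
      have heq : ((fun w : ((s'.image u : Finset I) : Type _) → ℂ =>
          ∏ r ∈ s'.attach, g r.1 (w ⟨u r.1, Finset.mem_image_of_mem u r.2⟩)) ∘
            (fun ω (i : (s'.image u : Finset I)) => ξ i ω))
          = fun ω => ∏ r ∈ s', g r (ξ (u r) ω) := by
        funext ω
        simp only [Function.comp]
        rw [← Finset.prod_attach s' (fun r => g r (ξ (u r) ω))]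
      rw [heq] at H
      exact H
    have hpt : ∫ ω, ∏ r ∈ Finset.cons a s' ha, g r (ξ (u r) ω) ∂μ
        = ∫ ω, (g a (ξ (u a) ω)) * ∏ r ∈ s', g r (ξ (u r) ω) ∂μ := by
      congr 1
      funext ω
      rw [Finset.prod_cons]
    rw [Finset.prod_cons, hpt,
      indep_integral_mul_cplx (X := fun ω => g a (ξ (u a) ω))
        (Y := fun ω => ∏ r ∈ s', g r (ξ (u r) ω)) ((hg a).comp (hmeas _))
        (Finset.measurable_prod _ (fun r _ => (hg r).comp (hmeas _))) hXY, IH hu']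


lemma offdiag_list_prod {R : Type*} [CommRing R] (k : ℕ) (f g : Fin k → R) :
    (List.ofFn (fun t => (!![0, f t; g t, 0] : Matrix (Fin 2) (Fin 2) R))).prod =
    if k % 2 = 0 then
      !![∏ t : Fin k, (if (t : ℕ) % 2 = 0 then f t else g t), 0;
         0, ∏ t : Fin k, (if (t : ℕ) % 2 = 0 then g t else f t)]
    else
      !![0, ∏ t : Fin k, (if (t : ℕ) % 2 = 0 then f t else g t);
         ∏ t : Fin k, (if (t : ℕ) % 2 = 0 then g t else f t), 0] := by
  induction k with
  | zero => simp [Matrix.one_fin_two]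
  | succ k IH =>
    have h0 : (∏ t : Fin (k+1), (if (t : ℕ) % 2 = 0 then f t else g t))
        = f 0 * ∏ t : Fin k, (if (t : ℕ) % 2 = 0 then g t.succ else f t.succ) := by
      rw [Fin.prod_univ_succ]
      congr 1
      apply Finset.prod_congr rfl
      intro t _
      rcases Nat.mod_two_eq_zero_or_one (t : ℕ) with h | h
      · have h' : ((t : ℕ) + 1) % 2 = 1 := by omega
        simp [Fin.val_succ, h, h']
      · have h' : ((t : ℕ) + 1) % 2 = 0 := by omega
        simp [Fin.val_succ, h, h']
    have h1 : (∏ t : Fin (k+1), (if (t : ℕ) % 2 = 0 then g t else f t))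
        = g 0 * ∏ t : Fin k, (if (t : ℕ) % 2 = 0 then f t.succ else g t.succ) := by
      rw [Fin.prod_univ_succ]
      congr 1
      apply Finset.prod_congr rfl
      intro t _
      rcases Nat.mod_two_eq_zero_or_one (t : ℕ) with h | h
      · have h' : ((t : ℕ) + 1) % 2 = 1 := by omega
        simp [Fin.val_succ, h, h']
      · have h' : ((t : ℕ) + 1) % 2 = 0 := by omega
        simp [Fin.val_succ, h, h']
    rw [List.ofFn_succ, List.prod_cons, IH (fun t => f t.succ) (fun t => g t.succ), h0, h1]
    rcases Nat.mod_two_eq_zero_or_one k with hk | hk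
    · have hk' : (k + 1) % 2 = 1 := by omega
      simp only [hk, hk', if_pos rfl]
      norm_num
    · have hk' : (k + 1) % 2 = 0 := by omega
      simp only [hk, hk']
      norm_num


lemma diag_pow_fin_two {R : Type*} [CommRing R] (q : R) (e : ℕ) :
    (!![q, 0; 0, q] : Matrix (Fin 2) (Fin 2) R) ^ e = !![q ^ e, 0; 0, q ^ e] := by
  induction e with
  | zero => simp [Matrix.one_fin_two]
  | succ e IH => rw [pow_succ, IH, Matrix.mul_fin_two]; norm_num [pow_succ]

lemma diag_list_prod {R : Type*} [CommRing R] (m : ℕ) (c : Fin m → R) :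
    (List.ofFn (fun r => (!![c r, 0; 0, c r] : Matrix (Fin 2) (Fin 2) R))).prod
      = !![∏ r : Fin m, c r, 0; 0, ∏ r : Fin m, c r] := by
  induction m with
  | zero => simp [Matrix.one_fin_two]
  | succ m IH =>
    rw [List.ofFn_succ, List.prod_cons, IH (fun r => c r.succ), Matrix.mul_fin_two,
      Fin.prod_univ_succ]
    norm_num

lemma memLpTop_mul {Ω : Type*} [MeasurableSpace Ω] {μ : Measure Ω} {f g : Ω → ℂ}
    (hf : MemLp f ⊤ μ) (hg : MemLp g ⊤ μ) : MemLp (fun ω => f ω * g ω) ⊤ μ := by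
  have := MemLp.smul (r := ⊤) (f := g) (φ := f) hg hf
  exact this

lemma memLpTop_conj {Ω : Type*} [MeasurableSpace Ω] {μ : Measure Ω} {f : Ω → ℂ}
    (hf : MemLp f ⊤ μ) : MemLp (fun ω => (starRingEnd ℂ) (f ω)) ⊤ μ := by
  refine MemLp.of_le hf
    (RCLike.continuous_conj.comp_aestronglyMeasurable hf.aestronglyMeasurable) ?_
  exact Filter.Eventually.of_forall fun ω => by simp

lemma memLpTop_prod {Ω : Type*} [MeasurableSpace Ω] {μ : Measure Ω} {κ : Type*}
    (s : Finset κ) (F : κ → Ω → ℂ) (h : ∀ t ∈ s, MemLp (F t) ⊤ μ) :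
    MemLp (fun ω => ∏ t ∈ s, F t ω) ⊤ μ := by
  classical
  induction s using Finset.cons_induction with
  | empty => simpa using memLp_top_const (1 : ℂ)
  | cons a s' ha IH =>
    have h1 := memLpTop_mul (h a (Finset.mem_cons_self _ _))
      (IH (fun t ht => h t (Finset.mem_cons_of_mem ht)))
    have : (fun ω => ∏ t ∈ Finset.cons a s' ha, F t ω)
        = fun ω => F a ω * ∏ t ∈ s', F t ω := by
      funext ω; rw [Finset.prod_cons]
    rw [this]
    exact h1

lemma memLpTop_pow {Ω : Type*} [MeasurableSpace Ω] {μ : Measure Ω} {f : Ω → ℂ}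
    (hf : MemLp f ⊤ μ) (n : ℕ) : MemLp (fun ω => f ω ^ n) ⊤ μ := by
  induction n with
  | zero => simpa using memLp_top_const (1 : ℂ)
  | succ n IH =>
    have := memLpTop_mul IH hf
    simpa [pow_succ] using this


/-- The `2×2` matrix model `x_i = [[0, ξ_i],[conj ξ_i, 0]]` over the algebra of
complex-valued functions on `Ω`. -/
def offDiagMatrix {Ω : Type*} (ξ : Ω → ℂ) : Matrix (Fin 2) (Fin 2) (Ω → ℂ) :=
  !![0, ξ; fun ω => (starRingEnd ℂ) (ξ ω), 0]

/-- If `(ξ_i)` are independent bounded complex random variables with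
`E[ξ_iⁿ conj(ξ_i)ᵐ] = 0` for `n ≠ m`, then the matrices `x_i = [[0, ξ_i],[conj ξ_i, 0]]`
half-commute and are half-independent with respect to `φ = E ∘ tr`. -/
theorem matrixModel_halfIndependent {Ω : Type*} [MeasurableSpace Ω]
    (μ : Measure Ω) [IsProbabilityMeasure μ]
    {I : Type*} (ξ : I → Ω → ℂ)
    (hmeas : ∀ i, Measurable (ξ i))
    (hbdd : ∀ i, MemLp (ξ i) ⊤ μ)
    (hindep : iIndepFun ξ μ)
    (hmom : ∀ (i : I) (m m' : ℕ), m ≠ m' →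
      ∫ ω, (ξ i ω) ^ m * ((starRingEnd ℂ) (ξ i ω)) ^ m' ∂μ = 0) :
    (∀ a b c : I,
        offDiagMatrix (ξ a) * offDiagMatrix (ξ b) * offDiagMatrix (ξ c) =
        offDiagMatrix (ξ c) * offDiagMatrix (ξ b) * offDiagMatrix (ξ a)) ∧
    HalfIndependent
      (fun m : Matrix (Fin 2) (Fin 2) (Ω → ℂ) => (∫ ω, (m 0 0 ω + m 1 1 ω) ∂μ) / 2)
      (fun i => offDiagMatrix (ξ i)) := by
  classical
  have entry_simp : True := trivial
  constructor
  · intro a b c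
    ext i' j' ω
    fin_cases i' <;> fin_cases j' <;>
      simp [offDiagMatrix, Matrix.mul_apply, Fin.sum_univ_two] <;> ring
  · constructor
    · -- part (a): independence of squares
      intro m j hj e he
      have key1 : ∀ P : Ω → ℂ, (∫ ω, (P ω + P ω) ∂μ) / 2 = ∫ ω, P ω ∂μ := by
        intro P
        have h2 : (fun ω => P ω + P ω) = fun ω => (2 : ℂ) * P ω := by funext ω; ring
        rw [h2, integral_const_mul, mul_div_cancel_left₀ _ (two_ne_zero)]
      have hsq : ∀ (i : I) (er : ℕ), offDiagMatrix (ξ i) ^ (2 * er)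
          = !![(fun ω => ξ i ω * (starRingEnd ℂ) (ξ i ω)) ^ er, 0;
               0, (fun ω => ξ i ω * (starRingEnd ℂ) (ξ i ω)) ^ er] := by
        intro i er
        have h2 : offDiagMatrix (ξ i) ^ 2
            = !![(fun ω => ξ i ω * (starRingEnd ℂ) (ξ i ω)), 0;
                 0, (fun ω => ξ i ω * (starRingEnd ℂ) (ξ i ω))] := by
          rw [pow_two]
          ext i' j' ω
          fin_cases i' <;> fin_cases j' <;>
            simp [offDiagMatrix, Matrix.mul_apply, Fin.sum_univ_two] <;> ring
        rw [pow_mul, h2, diag_pow_fin_two]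
      have hφpow : ∀ r : Fin m,
          (∫ ω, ((offDiagMatrix (ξ (j r)) ^ (2 * e r)) 0 0 ω
            + (offDiagMatrix (ξ (j r)) ^ (2 * e r)) 1 1 ω) ∂μ) / 2
          = ∫ ω, (ξ (j r) ω * (starRingEnd ℂ) (ξ (j r) ω)) ^ e r ∂μ := by
        intro r
        rw [hsq (j r) (e r)]
        simp only [Fin.isValue, Matrix.of_apply, Matrix.cons_val', Matrix.cons_val_zero,
          Matrix.empty_val', Matrix.cons_val_fin_one, Pi.zero_apply, Matrix.cons_val_one,
          Matrix.head_cons, Matrix.head_fin_const, Pi.pow_apply]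
        exact key1 _
      have hlist : (List.ofFn (fun r => offDiagMatrix (ξ (j r)) ^ (2 * e r))).prod
          = !![∏ r : Fin m, (fun ω => ξ (j r) ω * (starRingEnd ℂ) (ξ (j r) ω)) ^ e r, 0;
               0, ∏ r : Fin m, (fun ω => ξ (j r) ω * (starRingEnd ℂ) (ξ (j r) ω)) ^ e r] := by
        have : (fun r => offDiagMatrix (ξ (j r)) ^ (2 * e r))
            = fun r : Fin m =>
              !![(fun ω => ξ (j r) ω * (starRingEnd ℂ) (ξ (j r) ω)) ^ e r, 0;
                 0, (fun ω => ξ (j r) ω * (starRingEnd ℂ) (ξ (j r) ω)) ^ e r] := by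
          funext r; exact hsq (j r) (e r)
        rw [this, diag_list_prod]
      simp only [hlist]
      simp only [Fin.isValue, Matrix.of_apply, Matrix.cons_val', Matrix.cons_val_zero,
        Matrix.empty_val', Matrix.cons_val_fin_one, Pi.zero_apply, Matrix.cons_val_one,
        Matrix.head_cons, Matrix.head_fin_const, Finset.prod_apply, Pi.pow_apply]
      rw [key1 (fun ω => ∏ r : Fin m, (ξ (j r) ω * (starRingEnd ℂ) (ξ (j r) ω)) ^ e r)]
      have hmain := indep_integral_prod ξ hmeas hindep (Finset.univ : Finset (Fin m)) j
        (hj.injOn)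
        (fun r z => (z * (starRingEnd ℂ) z) ^ e r)
        (fun r => (measurable_id.mul (RCLike.continuous_conj.measurable)).pow_const (e r))
      rw [hmain]
      exact Finset.prod_congr rfl fun r _ => (hφpow r).symm
    · -- part (b): unbalanced partitions vanish
      intro k i hnb
      have hlist : (List.ofFn (fun t : Fin k => offDiagMatrix (ξ (i t)))).prod
          = if k % 2 = 0 then
              !![∏ t : Fin k, (if (t : ℕ) % 2 = 0 then ξ (i t)
                    else fun ω => (starRingEnd ℂ) (ξ (i t) ω)), 0;
                 0, ∏ t : Fin k, (if (t : ℕ) % 2 = 0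
                    then (fun ω => (starRingEnd ℂ) (ξ (i t) ω)) else ξ (i t))]
            else
              !![0, ∏ t : Fin k, (if (t : ℕ) % 2 = 0 then ξ (i t)
                    else fun ω => (starRingEnd ℂ) (ξ (i t) ω));
                 ∏ t : Fin k, (if (t : ℕ) % 2 = 0
                    then (fun ω => (starRingEnd ℂ) (ξ (i t) ω)) else ξ (i t)), 0] := by
        simpa only [offDiagMatrix] using
          offdiag_list_prod k (fun t => ξ (i t))
            (fun t => fun ω => (starRingEnd ℂ) (ξ (i t) ω))
      rcases Nat.mod_two_eq_zero_or_one k with hk | hk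
      · -- even case
        simp only [hlist, hk, eq_self_iff_true, if_true]
        simp only [Fin.isValue, Matrix.of_apply, Matrix.cons_val', Matrix.cons_val_zero,
          Matrix.empty_val', Matrix.cons_val_fin_one, Pi.zero_apply, Matrix.cons_val_one,
          Matrix.head_cons, Matrix.head_fin_const, Finset.prod_apply]
        set a : I → ℕ := fun jj =>
          (Finset.univ.filter fun t : Fin k => i t = jj ∧ (t : ℕ) % 2 = 0).card with ha
        set b : I → ℕ := fun jj =>
          (Finset.univ.filter fun t : Fin k => i t = jj ∧ ¬ (t : ℕ) % 2 = 0).card with hb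
        set S : Finset I := Finset.univ.image i with hS
        have hgroupA : ∀ ω, (∏ t : Fin k, (if (t : ℕ) % 2 = 0 then ξ (i t)
              else fun ω' => (starRingEnd ℂ) (ξ (i t) ω')) ω)
            = ∏ jj ∈ S, (ξ jj ω ^ a jj * ((starRingEnd ℂ) (ξ jj ω)) ^ b jj) := by
          intro ω
          rw [← Finset.prod_fiberwise_of_maps_to
            (fun t _ => Finset.mem_image_of_mem i (Finset.mem_univ t))
            (fun t => (if (t : ℕ) % 2 = 0 then ξ (i t)
              else fun ω' => (starRingEnd ℂ) (ξ (i t) ω')) ω)]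
          refine Finset.prod_congr rfl fun jj _ => ?_
          rw [← Finset.prod_filter_mul_prod_filter_not
            (Finset.univ.filter fun t : Fin k => i t = jj) (fun t : Fin k => (t : ℕ) % 2 = 0)]
          have h1 : (∏ t ∈ (Finset.univ.filter fun t : Fin k => i t = jj).filter
                (fun t : Fin k => (t : ℕ) % 2 = 0),
                (if (t : ℕ) % 2 = 0 then ξ (i t)
                  else fun ω' => (starRingEnd ℂ) (ξ (i t) ω')) ω)
              = ξ jj ω ^ a jj := by
            rw [Finset.prod_congr rfl (g := fun _ => ξ jj ω) fun t ht => ?_,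
              Finset.prod_const, Finset.filter_filter]
            simp only [Finset.mem_filter, Finset.mem_univ, true_and] at ht
            simp [ht.1, ht.2]
          have h2 : (∏ t ∈ (Finset.univ.filter fun t : Fin k => i t = jj).filter
                (fun t : Fin k => ¬ (t : ℕ) % 2 = 0),
                (if (t : ℕ) % 2 = 0 then ξ (i t)
                  else fun ω' => (starRingEnd ℂ) (ξ (i t) ω')) ω)
              = ((starRingEnd ℂ) (ξ jj ω)) ^ b jj := by
            rw [Finset.prod_congr rfl (g := fun _ => (starRingEnd ℂ) (ξ jj ω)) fun t ht => ?_,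
              Finset.prod_const, Finset.filter_filter]
            simp only [Finset.mem_filter, Finset.mem_univ, true_and] at ht
            simp [ht.1, ht.2]
          rw [h1, h2]
        have hgroupB : ∀ ω, (∏ t : Fin k, (if (t : ℕ) % 2 = 0
              then (fun ω' => (starRingEnd ℂ) (ξ (i t) ω')) else ξ (i t)) ω)
            = ∏ jj ∈ S, (ξ jj ω ^ b jj * ((starRingEnd ℂ) (ξ jj ω)) ^ a jj) := by
          intro ω
          rw [← Finset.prod_fiberwise_of_maps_to
            (fun t _ => Finset.mem_image_of_mem i (Finset.mem_univ t))
            (fun t => (if (t : ℕ) % 2 = 0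
              then (fun ω' => (starRingEnd ℂ) (ξ (i t) ω')) else ξ (i t)) ω)]
          refine Finset.prod_congr rfl fun jj _ => ?_
          rw [← Finset.prod_filter_mul_prod_filter_not
            (Finset.univ.filter fun t : Fin k => i t = jj) (fun t : Fin k => (t : ℕ) % 2 = 0)]
          have h1 : (∏ t ∈ (Finset.univ.filter fun t : Fin k => i t = jj).filter
                (fun t : Fin k => (t : ℕ) % 2 = 0),
                (if (t : ℕ) % 2 = 0
                  then (fun ω' => (starRingEnd ℂ) (ξ (i t) ω')) else ξ (i t)) ω)
              = ((starRingEnd ℂ) (ξ jj ω)) ^ a jj := by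
            rw [Finset.prod_congr rfl (g := fun _ => (starRingEnd ℂ) (ξ jj ω)) fun t ht => ?_,
              Finset.prod_const, Finset.filter_filter]
            simp only [Finset.mem_filter, Finset.mem_univ, true_and] at ht
            simp [ht.1, ht.2]
          have h2 : (∏ t ∈ (Finset.univ.filter fun t : Fin k => i t = jj).filter
                (fun t : Fin k => ¬ (t : ℕ) % 2 = 0),
                (if (t : ℕ) % 2 = 0
                  then (fun ω' => (starRingEnd ℂ) (ξ (i t) ω')) else ξ (i t)) ω)
              = ξ jj ω ^ b jj := by
            rw [Finset.prod_congr rfl (g := fun _ => ξ jj ω) fun t ht => ?_,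
              Finset.prod_const, Finset.filter_filter]
            simp only [Finset.mem_filter, Finset.mem_univ, true_and] at ht
            simp [ht.1, ht.2]
          rw [h1, h2, mul_comm]
        -- the unbalanced block
        obtain ⟨v, hv⟩ := not_forall.mp hnb
        have hset0 : block (Setoid.ker i) v ∩ {w : Fin k | (w : ℕ) % 2 = 0}
            = ((Finset.univ.filter fun t : Fin k => i t = i v ∧ (t : ℕ) % 2 = 0) :
                Finset (Fin k)) := by
          ext w
          simp only [block, Setoid.ker, Set.mem_inter_iff, Set.mem_setOf_eq,
            Finset.coe_filter, Finset.mem_filter, Finset.mem_univ, true_and,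
            Function.onFun]
          constructor
          · rintro ⟨h1, h2⟩; exact ⟨h1.symm, h2⟩
          · rintro ⟨h1, h2⟩; exact ⟨h1.symm, h2⟩

        have hset1 : block (Setoid.ker i) v ∩ {w : Fin k | (w : ℕ) % 2 = 1}
            = ((Finset.univ.filter fun t : Fin k => i t = i v ∧ ¬ (t : ℕ) % 2 = 0) :
                Finset (Fin k)) := by
          ext w
          simp only [block, Setoid.ker, Set.mem_inter_iff, Set.mem_setOf_eq,
            Finset.coe_filter, Finset.mem_filter, Finset.mem_univ, true_and,
            Function.onFun]
          constructor
          · rintro ⟨h1, h2⟩; exact ⟨h1.symm, by omega⟩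
          · rintro ⟨h1, h2⟩; exact ⟨h1.symm, by omega⟩
        have hne : a (i v) ≠ b (i v) := by
          intro hcontra
          apply hv
          rw [hset0, hset1, Set.ncard_coe_finset, Set.ncard_coe_finset]
          exact hcontra
        have hmemS : i v ∈ S := Finset.mem_image_of_mem i (Finset.mem_univ v)
        -- integrals of the two diagonal entries vanish
        have hintA : ∫ ω, (∏ t : Fin k, (if (t : ℕ) % 2 = 0 then ξ (i t)
              else fun ω' => (starRingEnd ℂ) (ξ (i t) ω')) ω) ∂μ = 0 := by
          have hrw : (fun ω => ∏ t : Fin k, (if (t : ℕ) % 2 = 0 then ξ (i t)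
                else fun ω' => (starRingEnd ℂ) (ξ (i t) ω')) ω)
              = fun ω => ∏ jj ∈ S, (ξ jj ω ^ a jj * ((starRingEnd ℂ) (ξ jj ω)) ^ b jj) :=
            funext hgroupA
          rw [hrw]
          have hmain := indep_integral_prod ξ hmeas hindep S id (Set.injOn_id _)
            (fun jj z => z ^ a jj * ((starRingEnd ℂ) z) ^ b jj)
            (fun jj => ((measurable_id.pow_const (a jj)).mul
              ((RCLike.continuous_conj.measurable).pow_const (b jj))))
          simp only [id] at hmain
          rw [hmain]
          exact Finset.prod_eq_zero hmemS (hmom (i v) (a (i v)) (b (i v)) hne)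
        have hintB : ∫ ω, (∏ t : Fin k, (if (t : ℕ) % 2 = 0
              then (fun ω' => (starRingEnd ℂ) (ξ (i t) ω')) else ξ (i t)) ω) ∂μ = 0 := by
          have hrw : (fun ω => ∏ t : Fin k, (if (t : ℕ) % 2 = 0
                then (fun ω' => (starRingEnd ℂ) (ξ (i t) ω')) else ξ (i t)) ω)
              = fun ω => ∏ jj ∈ S, (ξ jj ω ^ b jj * ((starRingEnd ℂ) (ξ jj ω)) ^ a jj) :=
            funext hgroupB
          rw [hrw]
          have hmain := indep_integral_prod ξ hmeas hindep S id (Set.injOn_id _)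
            (fun jj z => z ^ b jj * ((starRingEnd ℂ) z) ^ a jj)
            (fun jj => ((measurable_id.pow_const (b jj)).mul
              ((RCLike.continuous_conj.measurable).pow_const (a jj))))
          simp only [id] at hmain
          rw [hmain]
          exact Finset.prod_eq_zero hmemS (hmom (i v) (b (i v)) (a (i v)) (Ne.symm hne))
        -- integrability to split the sum
        have hMemA : MemLp (fun ω => ∏ t : Fin k, (if (t : ℕ) % 2 = 0 then ξ (i t)
              else fun ω' => (starRingEnd ℂ) (ξ (i t) ω')) ω) ⊤ μ := by
          apply memLpTop_prod
          intro t _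
          by_cases h : (t : ℕ) % 2 = 0
          · simpa [h] using hbdd (i t)
          · simpa [h] using memLpTop_conj (hbdd (i t))
        have hMemB : MemLp (fun ω => ∏ t : Fin k, (if (t : ℕ) % 2 = 0
              then (fun ω' => (starRingEnd ℂ) (ξ (i t) ω')) else ξ (i t)) ω) ⊤ μ := by
          apply memLpTop_prod
          intro t _
          by_cases h : (t : ℕ) % 2 = 0
          · simpa [h] using memLpTop_conj (hbdd (i t))
          · simpa [h] using hbdd (i t)
        rw [integral_add (hMemA.integrable le_top) (hMemB.integrable le_top),
          hintA, hintB]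
        norm_num
      · -- odd case: diagonal entries vanish identically
        simp only [hlist, hk]
        norm_num
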